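/- Let K be a spherically symmetric kernel on ℝ^d satisfying (K0)–(K2), i.e. K(z) = κ(‖z‖) for some κ : [0,∞) → [0,∞). Let Z be a random vector with Lebesgue density K, R := ‖Z‖, and set b := E(R⁴) / (E(R⁶) − E(R⁴)²/d) and a := 1 + b·E(R⁴)/d. Then for every j ∈ {1,…,d} and every multi-index γ ∈ ℕ₀^d with |γ| ≤ 3, ∫ K(z) (a z_j − b ‖z‖² z_j) z^γ dz = 1 if γ = e_j, and = 0 otherwise. -/

import Mathlib

open MeasureTheory Filter Topology

noncomputable section

/-- `ℝ^d` as a pi type; `volume` is `d`-dimensional Lebesgue measure. -/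
abbrev Vec (d : ℕ) := Fin d → ℝ

/-- The Euclidean norm on `ℝ^d`. -/
def euclNorm {d : ℕ} (z : Vec d) : ℝ := Real.sqrt (∑ i, z i ^ 2)

/-!
Put `w(z) = K(z) (a - b ‖z‖²)` and `δ = γ + e_j`, so that the integrand is `w(z) z^δ` with
`|δ| ≤ 4`, and `w` is radial. The reflections `z_i ↦ -z_i` kill every monomial with an odd
exponent, which leaves `δ = 2e_j`, `δ = 4e_j` and `δ = 2e_j + 2e_k`. For any radial weight
`w`, coordinate swaps and the map `(z_j, z_k) ↦ ((z_j + z_k)/√2, (z_j - z_k)/√2)` give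
`∫ w z_j⁴ = 3 ∫ w z_j² z_k²` and `d (d + 2) ∫ w z_j² z_k² = ∫ w ‖z‖⁴`. The constants `a` and
`b` are chosen so that `∫ w ‖z‖⁴ = a m₄ - b m₆ = 0` and `∫ w z_j² = a - b m₄ / d = 1`.
-/

section

variable {d : ℕ}

lemma euclNorm_nonneg (z : Vec d) : 0 ≤ euclNorm z := Real.sqrt_nonneg _

lemma euclNorm_sq (z : Vec d) : euclNorm z ^ 2 = ∑ i, z i ^ 2 :=
  Real.sq_sqrt (Finset.sum_nonneg fun _ _ => sq_nonneg _)

lemma abs_pow_le_euclNorm_pow (z : Vec d) (i : Fin d) (p : ℕ) : |z i ^ p| ≤ euclNorm z ^ p := by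
  rw [abs_pow]
  refine pow_le_pow_left₀ (abs_nonneg _) ?_ p
  rw [← Real.sqrt_sq_eq_abs, euclNorm]
  exact Real.sqrt_le_sqrt (Finset.single_le_sum (fun k _ => sq_nonneg (z k)) (Finset.mem_univ i))

lemma abs_pow_mul_pow_le_euclNorm_pow (z : Vec d) (i k : Fin d) (p q : ℕ) :
    |z i ^ p * z k ^ q| ≤ euclNorm z ^ (p + q) := by
  rw [abs_mul, pow_add]
  exact mul_le_mul (abs_pow_le_euclNorm_pow z i p) (abs_pow_le_euclNorm_pow z k q) (abs_nonneg _)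
    (pow_nonneg (euclNorm_nonneg z) p)

@[fun_prop]
lemma continuous_euclNorm : Continuous (euclNorm (d := d)) :=
  Real.continuous_sqrt.comp (continuous_finsetSum _ fun i _ => (continuous_apply i).pow 2)

lemma euclNorm_eq_norm_toLp (z : Vec d) : euclNorm z = ‖WithLp.toLp 2 z‖ := by
  rw [EuclideanSpace.norm_eq, euclNorm]
  simp_rw [Real.norm_eq_abs, sq_abs]

lemma euclNorm_eq_of_sum_sq_eq {y z : Vec d} (h : ∑ i, y i ^ 2 = ∑ i, z i ^ 2) :
    euclNorm y = euclNorm z := congrArg Real.sqrt h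

lemma ae_euclNorm_ne [Nonempty (Fin d)] (r : ℝ) : ∀ᵐ z : Vec d, euclNorm z ≠ r := by
  have hpre : {z : Vec d | euclNorm z = r} = WithLp.toLp 2 ⁻¹' Metric.sphere 0 r := by
    ext z; simp [euclNorm_eq_norm_toLp]
  refine (measure_eq_zero_iff_ae_notMem (s := {z | euclNorm z = r})).1 ?_
  rw [hpre, (PiLp.volume_preserving_toLp (Fin d)).measure_preimage
    Metric.isClosed_sphere.measurableSet.nullMeasurableSet]
  exact Measure.addHaar_sphere _ _ _

lemma integral_comp_of_euclNorm_eq (T : Vec d →ₗ[ℝ] Vec d)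
    (hT : ∀ z, euclNorm (T z) = euclNorm z) (f : Vec d → ℝ) :
    ∫ z, f (T z) = ∫ z, f z := by
  let e := WithLp.linearEquiv 2 ℝ (Vec d)
  let L : EuclideanSpace ℝ (Fin d) →ₗᵢ[ℝ] EuclideanSpace ℝ (Fin d) :=
    { toLinearMap := e.symm.toLinearMap ∘ₗ T ∘ₗ e.toLinearMap
      norm_map' := fun x => by
        simpa [e, euclNorm_eq_norm_toLp] using hT (WithLp.ofLp x) }
  have hofLp := EuclideanSpace.volume_preserving_symm_measurableEquiv_toLp (Fin d)
  calc ∫ z, f (T z) = ∫ x, f (WithLp.ofLp (L x)) := (hofLp.integral_comp' (f ∘ T)).symm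
    _ = ∫ x, f (WithLp.ofLp x) :=
      let L' := L.toLinearIsometryEquiv rfl
      L'.measurePreserving.integral_comp L'.toHomeomorph.measurableEmbedding (f ∘ WithLp.ofLp)
    _ = ∫ z, f z := hofLp.integral_comp' f

section MultiIndex

variable {ι : Type*} [Fintype ι] [DecidableEq ι]

lemma eq_single_of_sum_eq_apply {δ : ι → ℕ} {j : ι} (h : ∑ i, δ i = δ j) :
    δ = Pi.single j (δ j) := by
  rw [← Finset.add_sum_erase _ _ (Finset.mem_univ j), add_eq_left,
    Finset.sum_eq_zero_iff] at h
  funext i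
  rcases eq_or_ne i j with rfl | hij
  · simp
  · simp [hij, h i (Finset.mem_erase.2 ⟨hij, Finset.mem_univ i⟩)]

lemma exists_eq_single_of_even_of_sum_eq_two {δ : ι → ℕ} (heven : ∀ i, Even (δ i))
    (hsum : ∑ i, δ i = 2) : ∃ j, δ = Pi.single j 2 := by
  obtain ⟨j, -, hj⟩ := Finset.exists_ne_zero_of_sum_ne_zero (hsum.trans_ne two_ne_zero)
  have hle : δ j ≤ 2 := hsum ▸ Finset.single_le_sum (fun i _ => Nat.zero_le _) (Finset.mem_univ j)
  obtain ⟨m, hm⟩ := heven j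
  have hj2 : δ j = 2 := by omega
  exact ⟨j, hj2 ▸ eq_single_of_sum_eq_apply (hsum.trans hj2.symm)⟩

lemma even_sum_eq_four_cases {δ : ι → ℕ} (heven : ∀ i, Even (δ i)) (hsum : ∑ i, δ i = 4) :
    (∃ j, δ = Pi.single j 4) ∨ ∃ j k, j ≠ k ∧ δ = Pi.single j 2 + Pi.single k 2 := by
  obtain ⟨j, -, hj⟩ := Finset.exists_ne_zero_of_sum_ne_zero (hsum.trans_ne four_ne_zero)
  have hle : δ j ≤ 4 := hsum ▸ Finset.single_le_sum (fun i _ => Nat.zero_le _) (Finset.mem_univ j)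
  obtain ⟨m, hm⟩ := heven j
  rcases (by omega : δ j = 4 ∨ δ j = 2) with hj4 | hj2
  · exact Or.inl ⟨j, hj4 ▸ eq_single_of_sum_eq_apply (hsum.trans hj4.symm)⟩
  have hsingle : Pi.single j 2 ≤ δ := fun i => by
    rcases eq_or_ne i j with rfl | hij
    · simp [hj2]
    · simp [hij]
  have hrest : ∑ i, (δ - Pi.single j 2 : ι → ℕ) i = 2 := by
    simp only [Pi.sub_apply]
    rw [Finset.sum_tsub_distrib _ fun i _ => hsingle i, hsum, Finset.sum_pi_single']
    simp
  have hrest_even : ∀ i, Even ((δ - Pi.single j 2 : ι → ℕ) i) := fun i => by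
    rcases eq_or_ne i j with rfl | hij
    · simp [hj2]
    · simpa [hij] using heven i
  obtain ⟨k, hk⟩ := exists_eq_single_of_even_of_sum_eq_two hrest_even hrest
  refine Or.inr ⟨j, k, fun hjk => ?_, ?_⟩
  · subst hjk
    simpa [hj2] using congrFun hk j
  · rw [← hk, add_comm, tsub_add_cancel_of_le hsingle]

lemma prod_pow_single {M : Type*} [CommMonoid M] (x : ι → M) (j : ι) (n : ℕ) :
    ∏ i, x i ^ (Pi.single j n : ι → ℕ) i = x j ^ n :=
  (Fintype.prod_eq_single j fun i hi => by simp [hi]).trans (by simp)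

end MultiIndex

def reflectCoord (i : Fin d) : Vec d →ₗ[ℝ] Vec d :=
  LinearMap.pi fun k => (if k = i then -1 else 1 : ℝ) • LinearMap.proj k

lemma reflectCoord_apply (i k : Fin d) (z : Vec d) :
    reflectCoord i z k = if k = i then -z k else z k := by
  split_ifs with h <;> simp [reflectCoord, h]

lemma euclNorm_reflectCoord (i : Fin d) (z : Vec d) : euclNorm (reflectCoord i z) = euclNorm z :=
  euclNorm_eq_of_sum_sq_eq <| Finset.sum_congr rfl fun k _ => by
    rw [reflectCoord_apply]; split_ifs <;> ring

lemma euclNorm_funLeft_perm (σ : Equiv.Perm (Fin d)) (z : Vec d) :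
    euclNorm (LinearMap.funLeft ℝ ℝ σ z) = euclNorm z :=
  euclNorm_eq_of_sum_sq_eq (Equiv.sum_comp σ fun k => z k ^ 2)

def hadamard (j k : Fin d) : Vec d →ₗ[ℝ] Vec d :=
  let p : Fin d → Vec d →ₗ[ℝ] ℝ := LinearMap.proj
  LinearMap.pi fun l =>
    if l = j then (√2)⁻¹ • (p j + p k)
    else if l = k then (√2)⁻¹ • (p j - p k)
    else p l

lemma hadamard_apply_left (j k : Fin d) (z : Vec d) : hadamard j k z j = (z j + z k) / √2 := by
  simp [hadamard, div_eq_inv_mul, mul_add]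

lemma hadamard_apply_right {j k : Fin d} (hjk : j ≠ k) (z : Vec d) :
    hadamard j k z k = (z j - z k) / √2 := by
  simp [hadamard, hjk.symm, div_eq_inv_mul, mul_sub]

lemma hadamard_apply_of_ne {j k l : Fin d} (hlj : l ≠ j) (hlk : l ≠ k) (z : Vec d) :
    hadamard j k z l = z l := by
  simp [hadamard, hlj, hlk]

lemma euclNorm_hadamard {j k : Fin d} (hjk : j ≠ k) (z : Vec d) :
    euclNorm (hadamard j k z) = euclNorm z := by
  refine euclNorm_eq_of_sum_sq_eq (sub_eq_zero.1 ?_)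
  rw [← Finset.sum_sub_distrib, Fintype.sum_eq_add j k hjk fun l ⟨hlj, hlk⟩ => by
    rw [hadamard_apply_of_ne hlj hlk, sub_self]]
  rw [hadamard_apply_left, hadamard_apply_right hjk, div_pow, div_pow, Real.sq_sqrt zero_le_two]
  ring

lemma integrable_mul_of_abs_le {ρ g h : Vec d → ℝ} (hρ : AEStronglyMeasurable ρ)
    (hρh : Integrable fun z => ρ z * h z) (hg : Continuous g) (hgh : ∀ z, |g z| ≤ h z) :
    Integrable fun z => ρ z * g z :=
  hρh.mono (hρ.mul hg.aestronglyMeasurable) <| ae_of_all _ fun z => by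
    simp only [norm_mul, Real.norm_eq_abs]
    exact mul_le_mul_of_nonneg_left ((hgh z).trans (le_abs_self _)) (abs_nonneg _)

lemma integrable_mul_sq_mul_sq {ρ : Vec d → ℝ} (hρ : AEStronglyMeasurable ρ)
    (h4 : Integrable fun z => ρ z * euclNorm z ^ 4) (i k : Fin d) :
    Integrable fun z => ρ z * (z i ^ 2 * z k ^ 2) :=
  integrable_mul_of_abs_le hρ h4 (by fun_prop) fun z =>
    abs_pow_mul_pow_le_euclNorm_pow z i k 2 2

lemma integral_mul_sub_mul_euclNorm_sq_mul {K g : Vec d → ℝ} (a b : ℝ)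
    (hg : Integrable fun z => K z * g z)
    (hg2 : Integrable fun z => K z * (euclNorm z ^ 2 * g z)) :
    ∫ z, K z * (a - b * euclNorm z ^ 2) * g z =
      a * (∫ z, K z * g z) - b * ∫ z, K z * (euclNorm z ^ 2 * g z) := by
  rw [← integral_const_mul, ← integral_const_mul,
    ← integral_sub (hg.const_mul a) (hg2.const_mul b)]
  exact integral_congr_ae (ae_of_all _ fun z => by ring)

lemma integral_mul_ne_zero_of_ae_ne_zero {α : Type*} [MeasurableSpace α] {μ : Measure α}
    {f g : α → ℝ} (hf : 0 ≤ f) (hg : 0 ≤ g) (hfg : Integrable (fun x => f x * g x) μ)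
    (hg0 : ∀ᵐ x ∂μ, g x ≠ 0) (hf0 : ∫ x, f x ∂μ ≠ 0) : ∫ x, f x * g x ∂μ ≠ 0 := by
  intro h
  have hfg0 := (integral_eq_zero_iff_of_nonneg (fun x => mul_nonneg (hf x) (hg x)) hfg).1 h
  refine hf0 (integral_eq_zero_of_ae ?_)
  filter_upwards [hfg0, hg0] with x hx hgx
  exact (mul_eq_zero.1 hx).resolve_right hgx

/-- Given `m₂ = d`, `m₆ - m₄²/d = ∫ K(z) ‖z‖² (‖z‖² - m₄/d)² dz`, which cannot vanish because
`K` does not live on the null set `{‖z‖ = 0} ∪ {‖z‖² = m₄/d}`. -/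
lemma integral_mul_euclNorm_pow_six_sub_ne_zero [Nonempty (Fin d)] {K : Vec d → ℝ}
    (hKpos : 0 ≤ K) (hK0 : ∫ z, K z ≠ 0) (hKn : ∀ n : ℕ, Integrable fun z => K z * euclNorm z ^ n)
    (hm2 : ∫ z, K z * euclNorm z ^ 2 = d) :
    (∫ z, K z * euclNorm z ^ 6) - (∫ z, K z * euclNorm z ^ 4) ^ 2 / d ≠ 0 := by
  have hd : (d : ℝ) ≠ 0 := Nat.cast_ne_zero.2 (Fin.pos_iff_nonempty.2 ‹_›).ne'
  set c := (∫ z, K z * euclNorm z ^ 4) / d with hc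
  have hpt : ∀ z, K z * (euclNorm z ^ 2 * (euclNorm z ^ 2 - c) ^ 2) =
      K z * euclNorm z ^ 6 - 2 * c * (K z * euclNorm z ^ 4) + c ^ 2 * (K z * euclNorm z ^ 2) :=
    fun z => by ring
  have hint := ((hKn 6).sub ((hKn 4).const_mul (2 * c))).add ((hKn 2).const_mul (c ^ 2))
  have hexp : ∫ z, K z * (euclNorm z ^ 2 * (euclNorm z ^ 2 - c) ^ 2) =
      (∫ z, K z * euclNorm z ^ 6) - (∫ z, K z * euclNorm z ^ 4) ^ 2 / d := by
    simp only [hpt]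
    rw [integral_add (f := fun z => K z * euclNorm z ^ 6 - 2 * c * (K z * euclNorm z ^ 4))
      ((hKn 6).sub ((hKn 4).const_mul _)) ((hKn 2).const_mul _),
      integral_sub (hKn 6) ((hKn 4).const_mul _), integral_const_mul, integral_const_mul, hm2, hc]
    field_simp
    ring
  rw [← hexp]
  refine integral_mul_ne_zero_of_ae_ne_zero hKpos (fun z => by positivity)
    (hint.congr (ae_of_all _ fun z => (hpt z).symm)) ?_ hK0
  filter_upwards [ae_euclNorm_ne 0, ae_euclNorm_ne (√c)] with z hz0 hzc
  refine mul_ne_zero (pow_ne_zero _ hz0) (pow_ne_zero _ (sub_ne_zero.2 fun h => hzc ?_))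
  rw [← h, Real.sqrt_sq (euclNorm_nonneg z)]

def IsRadial (ρ : Vec d → ℝ) : Prop := ∀ y z, euclNorm y = euclNorm z → ρ y = ρ z

namespace IsRadial

section

variable {ρ : Vec d → ℝ} (hρ : IsRadial ρ)
include hρ

lemma mul_euclNorm_pow (n : ℕ) : IsRadial fun z => ρ z * euclNorm z ^ n :=
  fun y z h => by dsimp only; rw [hρ y z h, h]

lemma integral_mul_comp (T : Vec d →ₗ[ℝ] Vec d) (hT : ∀ z, euclNorm (T z) = euclNorm z)
    (g : Vec d → ℝ) : ∫ z, ρ z * g (T z) = ∫ z, ρ z * g z := by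
  rw [← integral_comp_of_euclNorm_eq T hT fun z => ρ z * g z]
  simp_rw [hρ _ _ (hT _)]

lemma integral_mul_comp_swap (i k : Fin d) (g : Vec d → ℝ) :
    ∫ z, ρ z * g (z ∘ Equiv.swap i k) = ∫ z, ρ z * g z :=
  hρ.integral_mul_comp _ (euclNorm_funLeft_perm _) g

lemma integral_mul_prod_pow_eq_zero {δ : Fin d → ℕ} {i : Fin d} (hi : Odd (δ i)) :
    ∫ z, ρ z * ∏ l, z l ^ δ l = 0 := by
  have hodd : ∀ z, ∏ l, reflectCoord i z l ^ δ l = -∏ l, z l ^ δ l := fun z => by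
    rw [← Finset.mul_prod_erase _ _ (Finset.mem_univ i),
      ← Finset.mul_prod_erase _ (fun l => z l ^ δ l) (Finset.mem_univ i),
      Finset.prod_congr rfl fun l hl => by
        rw [reflectCoord_apply, if_neg (Finset.ne_of_mem_erase hl)],
      reflectCoord_apply, if_pos rfl, hi.neg_pow, neg_mul]
  have h := hρ.integral_mul_comp (reflectCoord i) (euclNorm_reflectCoord i)
    fun z => ∏ l, z l ^ δ l
  simp only [hodd, mul_neg, integral_neg] at h
  linarith

variable (hρm : AEStronglyMeasurable ρ)
include hρm

lemma integral_mul_euclNorm_sq (h2 : Integrable fun z => ρ z * euclNorm z ^ 2) (j : Fin d) :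
    ∫ z, ρ z * euclNorm z ^ 2 = d * ∫ z, ρ z * z j ^ 2 := by
  calc ∫ z, ρ z * euclNorm z ^ 2 = ∫ z, ∑ i, ρ z * z i ^ 2 := by
        simp_rw [euclNorm_sq, Finset.mul_sum]
    _ = ∑ i, ∫ z, ρ z * z i ^ 2 := integral_finsetSum _ fun i _ =>
        integrable_mul_of_abs_le hρm h2 (by fun_prop) fun z => abs_pow_le_euclNorm_pow z i 2
    _ = ∑ _i : Fin d, ∫ z, ρ z * z j ^ 2 := Finset.sum_congr rfl fun i _ => by
        simpa using hρ.integral_mul_comp_swap i j fun z => z j ^ 2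
    _ = d * ∫ z, ρ z * z j ^ 2 := by simp

variable (h4 : Integrable fun z => ρ z * euclNorm z ^ 4)
include h4

lemma integral_mul_euclNorm_sq_mul_sq {j k : Fin d} (hkj : k ≠ j) :
    ∫ z, ρ z * (euclNorm z ^ 2 * z j ^ 2) =
      (∫ z, ρ z * z j ^ 4) + (d - 1) * ∫ z, ρ z * (z j ^ 2 * z k ^ 2) := by
  have hswap : ∀ l ∈ Finset.univ.erase j,
      ∫ z, ρ z * (z j ^ 2 * z l ^ 2) = ∫ z, ρ z * (z j ^ 2 * z k ^ 2) := fun l hl => by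
    simpa [Equiv.swap_apply_of_ne_of_ne (Finset.ne_of_mem_erase hl).symm hkj.symm] using
      hρ.integral_mul_comp_swap l k fun z => z j ^ 2 * z k ^ 2
  calc ∫ z, ρ z * (euclNorm z ^ 2 * z j ^ 2) = ∫ z, ∑ l, ρ z * (z j ^ 2 * z l ^ 2) := by
        refine integral_congr_ae (ae_of_all _ fun z => ?_)
        dsimp only
        rw [euclNorm_sq, Finset.sum_mul, Finset.mul_sum]
        exact Finset.sum_congr rfl fun l _ => by ring
    _ = ∑ l, ∫ z, ρ z * (z j ^ 2 * z l ^ 2) := integral_finsetSum _ fun l _ =>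
        integrable_mul_sq_mul_sq hρm h4 j l
    _ = (∫ z, ρ z * (z j ^ 2 * z j ^ 2)) + (d - 1) * ∫ z, ρ z * (z j ^ 2 * z k ^ 2) := by
        rw [← Finset.add_sum_erase _ _ (Finset.mem_univ j), Finset.sum_congr rfl hswap,
          Finset.sum_const, Finset.card_erase_of_mem (Finset.mem_univ j), Finset.card_univ,
          Fintype.card_fin, nsmul_eq_mul, Nat.cast_pred (Fin.pos j)]
    _ = _ := by simp_rw [← pow_add]

lemma integral_mul_pow_four_eq_three_mul {j k : Fin d} (hjk : j ≠ k) :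
    ∫ z, ρ z * z j ^ 4 = 3 * ∫ z, ρ z * (z j ^ 2 * z k ^ 2) := by
  have h := hρ.integral_mul_comp (hadamard j k) (euclNorm_hadamard hjk)
    fun z => z j ^ 2 * z k ^ 2
  have hk : ∫ z, ρ z * (z k ^ 2 * z k ^ 2) = ∫ z, ρ z * (z j ^ 2 * z j ^ 2) := by
    simpa using hρ.integral_mul_comp_swap j k fun z => z j ^ 2 * z j ^ 2
  have hint := integrable_mul_sq_mul_sq hρm h4
  have hpt : ∀ z, ρ z * (hadamard j k z j ^ 2 * hadamard j k z k ^ 2) =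
      (ρ z * (z j ^ 2 * z j ^ 2) + ρ z * (z k ^ 2 * z k ^ 2)
        - 2 * (ρ z * (z j ^ 2 * z k ^ 2))) / 4 := fun z => by
    rw [hadamard_apply_left, hadamard_apply_right hjk, div_pow, div_pow, Real.sq_sqrt zero_le_two]
    ring
  simp only [hpt] at h
  rw [integral_div, integral_sub ?_ ((hint j k).const_mul 2), integral_add (hint j j) (hint k k),
    integral_const_mul, hk] at h
  swap
  · exact (hint j j).add (hint k k)
  simp_rw [← pow_add] at h
  linarith

lemma mul_integral_mul_sq_mul_sq {j k : Fin d} (hjk : j ≠ k) :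
    d * (d + 2) * ∫ z, ρ z * (z j ^ 2 * z k ^ 2) = ∫ z, ρ z * euclNorm z ^ 4 := by
  have h2 : Integrable fun z => (ρ z * euclNorm z ^ 2) * euclNorm z ^ 2 := by
    simpa only [mul_assoc, ← pow_add] using h4
  calc d * (d + 2) * ∫ z, ρ z * (z j ^ 2 * z k ^ 2)
      = d * ((∫ z, ρ z * z j ^ 4) + (d - 1) * ∫ z, ρ z * (z j ^ 2 * z k ^ 2)) := by
        rw [hρ.integral_mul_pow_four_eq_three_mul hρm h4 hjk]; ring
    _ = d * ∫ z, (ρ z * euclNorm z ^ 2) * z j ^ 2 := by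
        rw [← hρ.integral_mul_euclNorm_sq_mul_sq hρm h4 hjk.symm]
        simp only [mul_assoc]
    _ = ∫ z, ρ z * euclNorm z ^ 4 := by
        rw [← (hρ.mul_euclNorm_pow 2).integral_mul_euclNorm_sq
          (hρm.mul (by fun_prop)) h2 j]
        simp only [mul_assoc, ← pow_add]

lemma mul_integral_mul_pow_four (j : Fin d) :
    d * (d + 2) * ∫ z, ρ z * z j ^ 4 = 3 * ∫ z, ρ z * euclNorm z ^ 4 := by
  by_cases h : ∃ k, k ≠ j
  · obtain ⟨k, hkj⟩ := h
    rw [hρ.integral_mul_pow_four_eq_three_mul hρm h4 hkj.symm,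
      ← hρ.mul_integral_mul_sq_mul_sq hρm h4 hkj.symm]
    ring
  · simp only [ne_eq, not_exists, not_not] at h
    have hd : (d : ℝ) = 1 := by
      exact_mod_cast (Fintype.card_fin d).symm.trans (Fintype.card_eq_one_iff.2 ⟨j, h⟩)
    have hnorm : ∀ z : Vec d, euclNorm z ^ 4 = z j ^ 4 := fun z => by
      rw [show 4 = 2 * 2 from rfl, pow_mul, pow_mul, euclNorm_sq,
        Fintype.sum_eq_single j fun k hk => absurd (h k) hk]
    simp only [hd, hnorm]
    ring

variable (h0 : ∫ z, ρ z * euclNorm z ^ 4 = 0)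
include h0

lemma integral_mul_prod_pow_eq_zero_of_sum_eq_four {δ : Fin d → ℕ} (hδ : ∑ i, δ i = 4) :
    ∫ z, ρ z * ∏ i, z i ^ δ i = 0 := by
  by_cases hodd : ∃ i, Odd (δ i)
  · obtain ⟨i, hi⟩ := hodd
    exact hρ.integral_mul_prod_pow_eq_zero hi
  simp only [not_exists, Nat.not_odd_iff_even] at hodd
  have hd : ∀ j : Fin d, (d : ℝ) * (d + 2) ≠ 0 := fun j => by
    have : (0 : ℝ) < d := Nat.cast_pos.2 (Fin.pos j)
    positivity
  rcases even_sum_eq_four_cases hodd hδ with ⟨j, rfl⟩ | ⟨j, k, hjk, rfl⟩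
  · have h := hρ.mul_integral_mul_pow_four hρm h4 j
    rw [h0, mul_zero] at h
    simpa only [prod_pow_single] using (mul_eq_zero.1 h).resolve_left (hd j)
  · have h := hρ.mul_integral_mul_sq_mul_sq hρm h4 hjk
    rw [h0] at h
    simpa only [Pi.add_apply, pow_add, Finset.prod_mul_distrib, prod_pow_single] using
      (mul_eq_zero.1 h).resolve_left (hd j)

lemma integral_mul_coord_mul_prod_pow {j : Fin d} (hj : ∫ z, ρ z * z j ^ 2 = 1)
    {γ : Fin d → ℕ} (hγ : ∑ i, γ i ≤ 3) :
    ∫ z, ρ z * z j * ∏ i, z i ^ γ i = if γ = Pi.single j 1 then 1 else 0 := by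
  have hprod : ∀ z : Vec d,
      z j * ∏ i, z i ^ γ i = ∏ i, z i ^ (γ + Pi.single j 1 : Fin d → ℕ) i := fun z => by
    simp only [Pi.add_apply, pow_add, Finset.prod_mul_distrib, prod_pow_single, pow_one, mul_comm]
  simp only [mul_assoc, hprod]
  split_ifs with hγj
  · simp_rw [hγj, ← Pi.single_add, prod_pow_single]
    exact hj
  set δ : Fin d → ℕ := γ + Pi.single j 1 with hδ
  by_cases hodd : ∃ i, Odd (δ i)
  · obtain ⟨i, hi⟩ := hodd
    exact hρ.integral_mul_prod_pow_eq_zero hi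
  simp only [not_exists, Nat.not_odd_iff_even] at hodd
  have hδsum : ∑ i, δ i = ∑ i, γ i + 1 := by
    simp [δ, Finset.sum_add_distrib, Finset.sum_pi_single']
  obtain ⟨m, hm⟩ : Even (∑ i, δ i) := Finset.even_sum _ fun i _ => hodd i
  rcases (by omega : ∑ i, δ i = 2 ∨ ∑ i, δ i = 4) with h2 | h4'
  · obtain ⟨i, hi⟩ := exists_eq_single_of_even_of_sum_eq_two hodd h2
    have hij : i = j := by
      by_contra hij
      simpa [δ, Pi.single_eq_of_ne' hij] using congrFun hi j
    refine absurd (add_right_cancel (b := Pi.single j 1) ?_) hγj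
    rw [← hδ, hi, hij, ← Pi.single_add]
  · exact hρ.integral_mul_prod_pow_eq_zero_of_sum_eq_four hρm h4 h0 h4'

end

lemma integral_mul_sub_mul_euclNorm_sq_mul_prod_pow {K : Vec d → ℝ} (hK : IsRadial K)
    (hKm : AEStronglyMeasurable K) (hKn : ∀ n : ℕ, Integrable fun z => K z * euclNorm z ^ n)
    {a b : ℝ} (hab : a * ∫ z, K z * euclNorm z ^ 4 = b * ∫ z, K z * euclNorm z ^ 6) {j : Fin d}
    (hj : a * (∫ z, K z * z j ^ 2) - b * ∫ z, K z * (euclNorm z ^ 2 * z j ^ 2) = 1)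
    {γ : Fin d → ℕ} (hγ : ∑ i, γ i ≤ 3) :
    ∫ z, K z * (a * z j - b * euclNorm z ^ 2 * z j) * ∏ i, z i ^ γ i =
      if γ = Pi.single j 1 then 1 else 0 := by
  have hKn' : ∀ n : ℕ, Integrable fun z => K z * (euclNorm z ^ 2 * euclNorm z ^ n) := fun n => by
    simpa only [← pow_add] using hKn (2 + n)
  have hw : IsRadial fun z => K z * (a - b * euclNorm z ^ 2) := fun y z h => by
    dsimp only; rw [hK y z h, h]
  have hw4 : Integrable fun z => K z * (a - b * euclNorm z ^ 2) * euclNorm z ^ 4 :=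
    (((hKn 4).const_mul a).sub ((hKn' 4).const_mul b)).congr
      (ae_of_all _ fun z => by simp only [Pi.sub_apply]; ring)
  have hw0 : ∫ z, K z * (a - b * euclNorm z ^ 2) * euclNorm z ^ 4 = 0 := by
    rw [integral_mul_sub_mul_euclNorm_sq_mul a b (hKn 4) (hKn' 4), sub_eq_zero]
    simpa only [← pow_add] using hab
  have hwj : ∫ z, K z * (a - b * euclNorm z ^ 2) * z j ^ 2 = 1 := by
    rwa [integral_mul_sub_mul_euclNorm_sq_mul a b
      (integrable_mul_of_abs_le hKm (hKn 2) (by fun_prop) fun z => abs_pow_le_euclNorm_pow z j 2)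
      (integrable_mul_of_abs_le hKm (hKn 4) (by fun_prop) fun z => by
        rw [abs_mul, abs_of_nonneg (by positivity), show 4 = 2 + 2 from rfl, pow_add]
        exact mul_le_mul_of_nonneg_left (abs_pow_le_euclNorm_pow z j 2) (by positivity))]
  rw [← hw.integral_mul_coord_mul_prod_pow (hKm.mul (by fun_prop)) hw4 hw0 hwj hγ]
  exact integral_congr_ae (ae_of_all _ fun z => by ring)

end IsRadial

end

theorem statement3_general {d : ℕ}
    (K : Vec d → ℝ) (hKmeas : Measurable K) (hKpos : ∀ z, 0 ≤ K z)
    (hKmom : ∀ r : ℝ, 0 < r → Integrable (fun z => K z * euclNorm z ^ r))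
    (hK0 : (∫ z : Vec d, K z) = 1)
    (hK1 : ∃ κ : ℝ → ℝ, (∀ t, 0 ≤ κ t) ∧ ∀ z : Vec d, K z = κ (euclNorm z))
    (hK2 : ∀ i j : Fin d, (∫ z : Vec d, K z * z i * z j) = if i = j then 1 else 0)
    (m4 m6 a b : ℝ)
    (hm4 : m4 = ∫ z : Vec d, K z * euclNorm z ^ 4)
    (hm6 : m6 = ∫ z : Vec d, K z * euclNorm z ^ 6)
    (hb : b = m4 / (m6 - m4 ^ 2 / d))
    (ha : a = 1 + b * m4 / d) :
    ∀ j : Fin d, ∀ γ : Fin d → ℕ, (∑ i, γ i) ≤ 3 →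
      (∫ z : Vec d, K z * (a * z j - b * euclNorm z ^ 2 * z j) * ∏ i, z i ^ γ i) =
        if γ = Pi.single j 1 then 1 else 0 := by
  intro j γ hγ
  have : Nonempty (Fin d) := ⟨j⟩
  have hd : (d : ℝ) ≠ 0 := Nat.cast_ne_zero.2 (Fin.pos j).ne'
  obtain ⟨κ, -, hκ⟩ := hK1
  have hK : IsRadial K := fun y z h => by rw [hκ, hκ, h]
  have hKm : AEStronglyMeasurable K := hKmeas.aestronglyMeasurable
  have hKn : ∀ n : ℕ, Integrable fun z => K z * euclNorm z ^ n
    | 0 => by simpa using integrable_of_integral_eq_one hK0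
    | n + 1 => by simpa only [Real.rpow_natCast] using hKmom (n + 1 : ℕ) (by positivity)
  have hKj : ∫ z, K z * z j ^ 2 = 1 := by simpa [mul_assoc, ← sq] using hK2 j j
  have hm2 : ∫ z, K z * euclNorm z ^ 2 = d := by
    rw [hK.integral_mul_euclNorm_sq hKm (hKn 2) j, hKj, mul_one]
  have hm4j : ∫ z, K z * (euclNorm z ^ 2 * z j ^ 2) = m4 / d := by
    have h := (hK.mul_euclNorm_pow 2).integral_mul_euclNorm_sq (hKm.mul (by fun_prop))
      (by simpa only [mul_assoc, ← pow_add] using hKn 4) j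
    simp only [mul_assoc, ← pow_add] at h
    rw [hm4, h, mul_div_cancel_left₀ _ hd]
  have hD : m6 - m4 ^ 2 / d ≠ 0 := hm4 ▸ hm6 ▸
    integral_mul_euclNorm_pow_six_sub_ne_zero hKpos (hK0 ▸ one_ne_zero) hKn hm2
  refine hK.integral_mul_sub_mul_euclNorm_sq_mul_prod_pow hKm hKn ?_ ?_ hγ
  · have hbD : b * (m6 - m4 ^ 2 / d) = m4 := by rw [hb]; exact div_mul_cancel₀ m4 hD
    rw [← hm4, ← hm6, ha]
    linear_combination (-1 : ℝ) * hbD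
  · rw [hKj, hm4j, ha]
    ring

/-- for a spherically symmetric kernel satisfying (K0)-(K2), the refined
polynomial `p_j(z) = a z_j - b ‖z‖² z_j` satisfies `∫ K p_j z^γ = 1{γ = e_j} · 1`
for all multi-indices `γ` with `|γ| ≤ 3`. -/
theorem statement3 {d : ℕ} (hd : 1 ≤ d)
    (K : Vec d → ℝ) (hKmeas : Measurable K) (hKpos : ∀ z, 0 ≤ K z)
    (hKbd : ∃ C : ℝ, ∀ z, K z ≤ C)
    (hKmom : ∀ r : ℝ, 0 < r → Integrable (fun z => K z * euclNorm z ^ r))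
    (hK0 : (∫ z : Vec d, K z) = 1)
    (hK1 : ∃ κ : ℝ → ℝ, (∀ t, 0 ≤ κ t) ∧ ∀ z : Vec d, K z = κ (euclNorm z))
    (hK2 : ∀ i j : Fin d, (∫ z : Vec d, K z * z i * z j) = if i = j then 1 else 0)
    (m4 m6 a b : ℝ)
    (hm4 : m4 = ∫ z : Vec d, K z * euclNorm z ^ 4)
    (hm6 : m6 = ∫ z : Vec d, K z * euclNorm z ^ 6)
    (hb : b = m4 / (m6 - m4 ^ 2 / d))
    (ha : a = 1 + b * m4 / d) :
    ∀ j : Fin d, ∀ γ : Fin d → ℕ, (∑ i, γ i) ≤ 3 →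
      (∫ z : Vec d, K z * (a * z j - b * euclNorm z ^ 2 * z j) * ∏ i, z i ^ γ i) =
        if γ = Pi.single j 1 then 1 else 0 :=
  statement3_general K hKmeas hKpos hKmom hK0 hK1 hK2 m4 m6 a b hm4 hm6 hb ha
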